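/- The defining ideal of the monomial curve C = C(105,252,119,136) (the gluing of C_1 = C(5,12) and C_2 = C(7,8) with q = 21 and p = 17) is I(C) = ⟨x_1^{12} − x_2^5, y_1^8 − y_2^7, x_1x_2 − y_1^3⟩ ⊂ K[x_1,x_2,y_1,y_2], and the ideal I(C)_* of the tangent cone of C at the origin is generated by G_* = {x_1x_2, x_2^5, y_1^{15}, y_2^7, x_2^4y_1^3, x_2^3y_1^6, x_2^2y_1^9, x_2y_1^{12}}, which is a Gröbner basis of I(C)_* with respect to the negative degree reverse lexicographical ordering with x_2 > y_2 > y_1 > x_1. -/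

import Mathlib

/-!
Let `v(μ) = 105 μ₀ + 252 μ₁ + 119 μ₂ + 136 μ₃` be the value in the semigroup of the monomial
`x^μ`; the coefficient of `t^d` in the image of `f` is the sum of the coefficients of the
monomials of `f` of value `d`. Call `x^μ` standard if no element of `G_*` divides it. The key
arithmetic fact is that a standard monomial is the unique monomial of largest degree among those
of its value; in particular different standard monomials have different values.

Each element `x^s` of `G_*` comes with a binomial `x^s - x^s'` in the ideal `J` of the three
given binomials, where `x^s'` has the same value, larger degree, and smaller weight
`2μ₀ + 8μ₁ + 3μ₂ + 4μ₃`. Rewriting with these binomials reduces every polynomial modulo `J` to one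
supported on standard monomials, and such a polynomial lies in `I(C)` only if it is zero; hence
`I(C) = J`. A least-degree form of an element of `I(C)` cannot contain a standard monomial, since
another monomial of the same value occurs and has smaller degree; so `I(C)_* ⊆ (G_*)`, and the
binomials give the reverse inclusion. A monomial ideal is its own ideal of leading monomials, so
`G_*` is a standard basis.
-/

open MvPolynomial

noncomputable section

/-- The total degree of a monomial exponent vector. -/
def monDeg {N : ℕ} (μ : Fin N →₀ ℕ) : ℕ := μ.sum fun _ e => e

/-- The numerical semigroup (additive submonoid of `ℕ`) generated by the `n i`. -/
def numSemigroup {k : ℕ} (n : Fin k → ℕ) : AddSubmonoid ℕ :=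
  AddSubmonoid.closure (Set.range n)

/-- The family `n` minimally generates the numerical semigroup `⟨n 0, …⟩`:
no generator lies in the submonoid generated by the remaining ones. -/
def MinimallyGenerates {k : ℕ} (n : Fin k → ℕ) : Prop :=
  ∀ j : Fin k, n j ∉ AddSubmonoid.closure (n '' {i | i ≠ j})

/-- The defining (toric) ideal `I(C)` of the affine monomial curve
`C(n 0, …, n (k-1))`, i.e. the kernel of `x i ↦ t ^ n i`. -/
def curveIdeal (K : Type*) [Field K] {k : ℕ} (n : Fin k → ℕ) :
    Ideal (MvPolynomial (Fin k) K) :=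
  RingHom.ker (aeval (fun i => (Polynomial.X : Polynomial K) ^ n i) :
    MvPolynomial (Fin k) K →ₐ[K] Polynomial K)

/-- The minimal total degree of the monomials occurring in `f`. -/
def minDeg {K : Type*} [Field K] {N : ℕ} (f : MvPolynomial (Fin N) K) : ℕ :=
  sInf (monDeg '' (f.support : Set (Fin N →₀ ℕ)))

/-- `f₋`, the homogeneous summand of `f` of least degree. -/
def lowHom {K : Type*} [Field K] {N : ℕ} (f : MvPolynomial (Fin N) K) :
    MvPolynomial (Fin N) K :=
  homogeneousComponent (minDeg f) f

/-- `I(C)_*`, the defining ideal of the tangent cone of the monomial curve at the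
origin: the ideal generated by the least-degree homogeneous summands `f₋` of the
elements of `I(C)`. -/
def tangentConeIdeal (K : Type*) [Field K] {k : ℕ} (n : Fin k → ℕ) :
    Ideal (MvPolynomial (Fin k) K) :=
  Ideal.span {g | ∃ f ∈ curveIdeal K n, f ≠ 0 ∧ g = lowHom f}

/-- A Noetherian (graded-)local ring `R` with distinguished maximal ideal `I` is
Cohen-Macaulay iff it admits a regular sequence inside `I` whose length is the Krull
dimension of `R` (i.e. `depth_I R = dim R`). -/
def IsCohenMacaulayWrt (R : Type*) [CommRing R] (I : Ideal R) : Prop :=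
  ∃ rs : List R, (∀ r ∈ rs, r ∈ I) ∧ RingTheory.Sequence.IsRegular R rs ∧
    (rs.length : WithBot (WithTop ℕ)) = ringKrullDim R

/-- The irrelevant maximal ideal of the graded ring `K[x]/J`, generated by the images
of the variables. -/
def irrelevantIdeal (K : Type*) [Field K] {N : ℕ} (J : Ideal (MvPolynomial (Fin N) K)) :
    Ideal (MvPolynomial (Fin N) K ⧸ J) :=
  Ideal.map (Ideal.Quotient.mk J) (Ideal.span (Set.range X))

/-- The monomial curve `C(n 0, …, n (k-1))` has Cohen-Macaulay tangent cone at the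
origin: the ring `K[x]/I(C)_*` is Cohen-Macaulay. -/
def HasCMTangentCone (K : Type*) [Field K] {k : ℕ} (n : Fin k → ℕ) : Prop :=
  IsCohenMacaulayWrt (MvPolynomial (Fin k) K ⧸ tangentConeIdeal K n)
    (irrelevantIdeal K (tangentConeIdeal K n))

/-- The Hilbert function of the graded ring `K[x]/J`:
`d ↦ dim_K` of the degree-`d` homogeneous piece. -/
def gradedHF (K : Type*) [Field K] {N : ℕ} (J : Ideal (MvPolynomial (Fin N) K))
    (d : ℕ) : ℕ :=
  Module.finrank K ((homogeneousSubmodule (Fin N) K d).map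
    (Ideal.Quotient.mkₐ K J).toLinearMap)

/-- The Hilbert function of the local ring `K[[t^{n 0}, …, t^{n (k-1)}]]`, i.e. the
Hilbert function of its associated graded ring `K[x]/I(C)_*`. -/
def hilbertFn (K : Type*) [Field K] {k : ℕ} (n : Fin k → ℕ) : ℕ → ℕ :=
  gradedHF K (tangentConeIdeal K n)

/-- `a` is greater than `b` in the negative degree reverse lexicographical order
determined by the priority function `ρ` (`ρ v < ρ w` means the variable `v` is higher
than `w`; the variable with the largest `ρ`-value is the lowest one): a monomial of
smaller total degree is larger, and ties are broken reverse-lexicographically, i.e.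
looking at the lowest variable in which the monomials differ. -/
def NegDegRevLexGT {N : ℕ} (ρ : Fin N → ℕ) (a b : Fin N →₀ ℕ) : Prop :=
  monDeg a < monDeg b ∨ (monDeg a = monDeg b ∧
    ∃ v : Fin N, a v < b v ∧ ∀ w : Fin N, ρ v < ρ w → a w = b w)

/-- `μ` is the exponent vector of the leading monomial `LM f` of `f` with respect to
the negative degree reverse lexicographical order given by `ρ`. -/
def IsLM {K : Type*} [Field K] {N : ℕ} (ρ : Fin N → ℕ)
    (f : MvPolynomial (Fin N) K) (μ : Fin N →₀ ℕ) : Prop :=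
  μ ∈ f.support ∧ ∀ μ' ∈ f.support, μ' ≠ μ → NegDegRevLexGT ρ μ μ'

/-- The leading monomial ideal `⟨LM(I)⟩` of an ideal `I` with respect to the negative
degree reverse lexicographical order given by `ρ`. -/
def lmIdeal (K : Type*) [Field K] {N : ℕ} (ρ : Fin N → ℕ)
    (I : Ideal (MvPolynomial (Fin N) K)) : Ideal (MvPolynomial (Fin N) K) :=
  Ideal.span ((fun μ => monomial μ (1 : K)) '' {μ | ∃ f ∈ I, IsLM ρ f μ})

/-- `G` is a standard basis of `I` with respect to the local order given by `ρ`: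
a finite subset of `I` whose leading monomials generate the leading monomial ideal
of `I`. -/
def IsStandardBasis (K : Type*) [Field K] {N : ℕ} (ρ : Fin N → ℕ)
    (I : Ideal (MvPolynomial (Fin N) K)) (G : Set (MvPolynomial (Fin N) K)) : Prop :=
  G.Finite ∧ G ⊆ (I : Set (MvPolynomial (Fin N) K)) ∧
    lmIdeal K ρ I = Ideal.span ((fun μ => monomial μ (1 : K)) '' {μ | ∃ g ∈ G, IsLM ρ g μ})

/-- `G` is a minimal standard basis of `I`: a standard basis no proper subset of
which is a standard basis. -/
def IsMinimalStandardBasis (K : Type*) [Field K] {N : ℕ} (ρ : Fin N → ℕ)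
    (I : Ideal (MvPolynomial (Fin N) K)) (G : Set (MvPolynomial (Fin N) K)) : Prop :=
  IsStandardBasis K ρ I G ∧ ∀ g ∈ G, ¬ IsStandardBasis K ρ I (G \ {g})

/-- The priority function on `Fin k` describing the variable order
`x_2 > x_3 > ⋯ > x_k > x_1` (variables `x_1, …, x_k` being indexed by `0, …, k-1`),
i.e. the negative degree reverse lexicographical order making `x_1` the lowest
variable. -/
def rotOrder (k : ℕ) : Fin k → ℕ := fun v => if (v : ℕ) = 0 then k - 1 else (v : ℕ) - 1

/-- The priority function on `Fin (l + k)` describing the variable order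
`y_2 > ⋯ > y_k > y_1 > x_2 > ⋯ > x_l > x_1`, where `x_1, …, x_l` are the variables
indexed by `0, …, l-1` and `y_1, …, y_k` are the variables indexed by `l, …, l+k-1`. -/
def glueOrder (l k : ℕ) : Fin (l + k) → ℕ := fun v =>
  if (v : ℕ) < l then (if (v : ℕ) = 0 then k + l - 1 else k + (v : ℕ) - 1)
  else (if (v : ℕ) = l then k - 1 else (v : ℕ) - l - 1)

/-- `S = ⟨q•m, p•n⟩` is a gluing of the numerical semigroups `⟨m⟩` and `⟨n⟩`. -/
def IsGluing {l k : ℕ} (m : Fin l → ℕ) (n : Fin k → ℕ) (p q : ℕ) : Prop :=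
  (∃ b : Fin l → ℕ, p = ∑ i, b i * m i) ∧ (∃ a : Fin k → ℕ, q = ∑ j, a j * n j) ∧
    Nat.Coprime p q ∧ p ∉ Set.range m ∧ q ∉ Set.range n ∧
    Disjoint (Set.range fun i => q * m i) (Set.range fun j => p * n j)

/-- `S = ⟨q•m, p•n⟩` is a nice gluing of the numerical semigroups `⟨m⟩` and `⟨n⟩`:
a gluing in which `q = a₁ * n 0` with `a₁ ≤ b 0 + ⋯ + b (l-1)`. -/
def IsNiceGluing {l k : ℕ} (hk : 0 < k) (m : Fin l → ℕ) (n : Fin k → ℕ)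
    (p q : ℕ) : Prop :=
  ∃ (b : Fin l → ℕ) (a₁ : ℕ), p = ∑ i, b i * m i ∧ q = a₁ * n ⟨0, hk⟩ ∧
    (a₁ ≤ ∑ i, b i) ∧ Nat.Coprime p q ∧ p ∉ Set.range m ∧ q ∉ Set.range n ∧
    Disjoint (Set.range fun i => q * m i) (Set.range fun j => p * n j)

/-- The monomial curve `C(n)` in affine `k`-space is a complete intersection:
its defining ideal is generated by a regular sequence of `k - 1` (codimension many)
elements. -/
def IsCompleteIntersectionCurve (K : Type*) [Field K] {k : ℕ} (n : Fin k → ℕ) : Prop :=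
  ∃ fs : List (MvPolynomial (Fin k) K), fs.length + 1 = k ∧
    RingTheory.Sequence.IsRegular (MvPolynomial (Fin k) K) fs ∧
    Ideal.span {f | f ∈ fs} = curveIdeal K n

/-- A commutative ring is a Gorenstein local ring iff it is Noetherian, has a unique
maximal ideal `I`, and admits a regular sequence `rs` in `I` of length `dim R`
(a system of parameters) such that the zero-dimensional quotient `R/(rs)` has simple
socle (the socle being the submodule killed by `I`). -/
def IsGorensteinLocalRing (R : Type*) [CommRing R] : Prop :=
  IsNoetherianRing R ∧ ∃ I : Ideal R, I.IsMaximal ∧ (∀ J : Ideal R, J.IsMaximal → J = I) ∧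
    ∃ rs : List R, (∀ r ∈ rs, r ∈ I) ∧ RingTheory.Sequence.IsRegular R rs ∧
      (rs.length : WithBot (WithTop ℕ)) = ringKrullDim R ∧
      IsSimpleModule R (Submodule.torsionBySet R (R ⧸ Ideal.span {r | r ∈ rs}) (I : Set R))

/-- The local ring `K[[t^{n 0}, …, t^{n (k-1)}]]`: the subalgebra of `K[[t]]`
consisting of the power series supported on the numerical semigroup `⟨n⟩`. -/
def semigroupPowerSeriesRing (K : Type*) [Field K] {k : ℕ} (n : Fin k → ℕ) :
    Subalgebra K (PowerSeries K) where
  carrier := {f | ∀ d : ℕ, PowerSeries.coeff (R := K) d f ≠ 0 → d ∈ numSemigroup n}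
  add_mem' := by
    intro f g hf hg d hd
    by_cases h : PowerSeries.coeff (R := K) d f ≠ 0
    · exact hf d h
    · push_neg at h
      refine hg d ?_
      rw [map_add, h, zero_add] at hd
      exact hd
  mul_mem' := by
    intro f g hf hg d hd
    rw [PowerSeries.coeff_mul] at hd
    obtain ⟨⟨i, j⟩, hij, hne⟩ := Finset.exists_ne_zero_of_sum_ne_zero hd
    have hd' : i + j = d := (Finset.HasAntidiagonal.mem_antidiagonal).mp hij
    have hi : PowerSeries.coeff (R := K) i f ≠ 0 := left_ne_zero_of_mul hne
    have hj : PowerSeries.coeff (R := K) j g ≠ 0 := right_ne_zero_of_mul hne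
    exact hd' ▸ add_mem (hf i hi) (hg j hj)
  algebraMap_mem' := by
    intro a d hd
    by_cases h : d = 0
    · exact h ▸ zero_mem _
    · exfalso
      apply hd
      rw [PowerSeries.algebraMap_apply, PowerSeries.coeff_C, if_neg h]


def IsStandard {σ : Type*} (S : Set (σ →₀ ℕ)) (μ : σ →₀ ℕ) : Prop := ∀ s ∈ S, ¬ s ≤ μ

section Reduction

variable {σ R : Type*} [CommRing R] {S : Set (σ →₀ ℕ)}

theorem injOn_weight_isStandard {n : σ → ℕ}
    (hmax : ∀ μ ν, IsStandard S μ → Finsupp.weight n ν = Finsupp.weight n μ → ν ≠ μ →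
      ν.degree < μ.degree) :
    Set.InjOn (Finsupp.weight n) {μ | IsStandard S μ} := by
  intro μ hμ ν hν h
  by_contra hne
  exact (hmax μ ν hμ h.symm (Ne.symm hne)).not_gt (hmax ν μ hν h hne)

theorem exists_isStandard_monomial_sub_mem {J : Ideal (MvPolynomial σ R)} (w : σ → ℕ)
    (hred : ∀ s ∈ S, ∃ s', Finsupp.weight w s' < Finsupp.weight w s ∧
      monomial s (1 : R) - monomial s' 1 ∈ J) (μ : σ →₀ ℕ) :
    ∃ ν, IsStandard S ν ∧ monomial μ (1 : R) - monomial ν 1 ∈ J := by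
  induction h : Finsupp.weight w μ using Nat.strong_induction_on generalizing μ with
  | _ N ih =>
    by_cases hμ : IsStandard S μ
    · exact ⟨μ, hμ, by simp⟩
    obtain ⟨s, hs, hsμ⟩ : ∃ s ∈ S, s ≤ μ := by simpa [IsStandard] using hμ
    obtain ⟨s', hws, hss'⟩ := hred s hs
    have hsplit : Finsupp.weight w (μ - s) + Finsupp.weight w s = N := by
      rw [← map_add, tsub_add_cancel_of_le hsμ, h]
    obtain ⟨ν, hν, hμ'ν⟩ := ih _ (by rw [map_add]; omega) (μ - s + s') rfl
    refine ⟨ν, hν, ?_⟩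
    have hstep : monomial μ (1 : R) - monomial ν 1 = monomial (μ - s) 1 *
        (monomial s 1 - monomial s' 1) + (monomial (μ - s + s') 1 - monomial ν 1) := by
      rw [mul_sub, monomial_mul, monomial_mul, one_mul, tsub_add_cancel_of_le hsμ]
      ring
    rw [hstep]
    exact J.add_mem (J.mul_mem_left _ hss') hμ'ν

end Reduction

section CurveIdeal

variable {K : Type*} [Field K] {k : ℕ}

theorem aeval_X_pow_monomial (n : Fin k → ℕ) (μ : Fin k →₀ ℕ) (c : K) :
    aeval (fun i => (Polynomial.X : Polynomial K) ^ n i) (monomial μ c) =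
      Polynomial.C c * Polynomial.X ^ Finsupp.weight n μ := by
  rw [aeval_monomial, Polynomial.algebraMap_eq, Finsupp.weight_apply, Finsupp.sum,
    Finsupp.prod, ← Finset.prod_pow_eq_pow_sum]
  simp only [← pow_mul, smul_eq_mul, mul_comm]

theorem coeff_aeval_X_pow (n : Fin k → ℕ) (f : MvPolynomial (Fin k) K) (d : ℕ) :
    (aeval (fun i => (Polynomial.X : Polynomial K) ^ n i) f).coeff d =
      ∑ μ ∈ f.support with Finsupp.weight n μ = d, coeff μ f := by
  conv_lhs => rw [f.as_sum, map_sum]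
  simp only [aeval_X_pow_monomial, Polynomial.finsetSum_coeff, Polynomial.coeff_C_mul_X_pow,
    Finset.sum_filter]
  exact Finset.sum_congr rfl fun μ _ => by split_ifs <;> simp_all [eq_comm]

theorem exists_weight_eq_of_mem_curveIdeal {n : Fin k → ℕ} {f : MvPolynomial (Fin k) K}
    (hf : f ∈ curveIdeal K n) {μ : Fin k →₀ ℕ} (hμ : μ ∈ f.support) :
    ∃ ν ∈ f.support, ν ≠ μ ∧ Finsupp.weight n ν = Finsupp.weight n μ := by
  by_contra! h
  have hf0 : aeval (fun i => (Polynomial.X : Polynomial K) ^ n i) f = 0 := hf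
  have hcoeff := coeff_aeval_X_pow n f (Finsupp.weight n μ)
  rw [hf0, Polynomial.coeff_zero, Finset.sum_eq_single_of_mem μ (by simpa using hμ)
    fun ν hν hne => absurd (Finset.mem_filter.1 hν).2 (h ν (Finset.mem_filter.1 hν).1 hne)]
    at hcoeff
  exact mem_support_iff.1 hμ hcoeff.symm

theorem eq_zero_of_mem_curveIdeal_of_injOn {n : Fin k → ℕ} {f : MvPolynomial (Fin k) K}
    (hf : f ∈ curveIdeal K n)
    (hinj : Set.InjOn (Finsupp.weight n) (f.support : Set (Fin k →₀ ℕ))) : f = 0 := by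
  by_contra hf0
  obtain ⟨μ, hμ⟩ := support_nonempty.2 hf0
  obtain ⟨ν, hν, hne, hw⟩ := exists_weight_eq_of_mem_curveIdeal hf hμ
  exact hne (hinj hν hμ hw)

theorem monomial_sub_monomial_mem_curveIdeal (n : Fin k → ℕ) {μ ν : Fin k →₀ ℕ}
    (h : Finsupp.weight n μ = Finsupp.weight n ν) :
    monomial μ (1 : K) - monomial ν 1 ∈ curveIdeal K n := by
  rw [curveIdeal, RingHom.mem_ker, map_sub, aeval_X_pow_monomial, aeval_X_pow_monomial, h,
    sub_self]

theorem curveIdeal_le_of_reduction {n : Fin k → ℕ} {S : Set (Fin k →₀ ℕ)}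
    {J : Ideal (MvPolynomial (Fin k) K)} (w : Fin k → ℕ) (hJ : J ≤ curveIdeal K n)
    (hinj : Set.InjOn (Finsupp.weight n) {μ | IsStandard S μ})
    (hred : ∀ s ∈ S, ∃ s', Finsupp.weight w s' < Finsupp.weight w s ∧
      monomial s (1 : K) - monomial s' 1 ∈ J) :
    curveIdeal K n ≤ J := by
  classical
  intro f hf
  choose nf hnf hmem using exists_isStandard_monomial_sub_mem w hred
  set g := ∑ μ ∈ f.support, monomial (nf μ) (coeff μ f)
  have hfg : f - g ∈ J := by
    have : f - g = ∑ μ ∈ f.support, C (coeff μ f) * (monomial μ 1 - monomial (nf μ) 1) := by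
      conv_lhs => rw [f.as_sum]
      rw [← Finset.sum_sub_distrib]
      simp only [mul_sub, C_mul_monomial, mul_one]
    rw [this]
    exact J.sum_mem fun μ _ => J.mul_mem_left _ (hmem μ)
  have hg : g = 0 := by
    refine eq_zero_of_mem_curveIdeal_of_injOn ?_ (hinj.mono fun μ hμ => ?_)
    · simpa using sub_mem hf (hJ hfg)
    · obtain ⟨ν, -, hν⟩ := Finset.mem_biUnion.1 (support_sum hμ)
      rw [Finset.mem_singleton.1 (support_monomial_subset hν)]
      exact hnf ν
  simpa [hg] using hfg

end CurveIdeal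

section LeastDegreeForm

variable {K : Type*} [Field K] {N : ℕ}

theorem minDeg_le {f : MvPolynomial (Fin N) K} {μ : Fin N →₀ ℕ} (h : μ ∈ f.support) :
    minDeg f ≤ μ.degree :=
  Nat.sInf_le ⟨μ, h, rfl⟩

theorem mem_support_lowHom_iff {f : MvPolynomial (Fin N) K} {μ : Fin N →₀ ℕ} :
    μ ∈ (lowHom f).support ↔ μ ∈ f.support ∧ μ.degree = minDeg f := by
  rw [lowHom, support_homogeneousComponent, Finset.mem_filter]

theorem lowHom_monomial_sub_monomial {μ ν : Fin N →₀ ℕ} (h : μ.degree < ν.degree) :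
    lowHom (monomial μ (1 : K) - monomial ν 1) = monomial μ 1 := by
  classical
  have hne : ν ≠ μ := by rintro rfl; exact h.false
  have hmin : minDeg (monomial μ (1 : K) - monomial ν 1) = μ.degree := by
    have hμ : μ ∈ (monomial μ (1 : K) - monomial ν 1).support := by
      simp [coeff_monomial, hne]
    refine le_antisymm (minDeg_le hμ) (le_csInf ⟨_, μ, hμ, rfl⟩ ?_)
    rintro _ ⟨ξ, hξ, rfl⟩
    rcases Finset.mem_union.1 (support_sub _ _ _ hξ) with hξ | hξ <;>
      rw [Finset.mem_singleton.1 (support_monomial_subset hξ)]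
    exacts [le_rfl, h.le]
  rw [lowHom, hmin, map_sub, homogeneousComponent_of_mem (isHomogeneous_monomial _ rfl),
    homogeneousComponent_of_mem (isHomogeneous_monomial _ rfl), if_pos rfl, if_neg h.ne,
    sub_zero]

end LeastDegreeForm

section TangentCone

variable {K : Type*} [Field K] {k : ℕ} {n : Fin k → ℕ} {S : Set (Fin k →₀ ℕ)}

theorem tangentConeIdeal_le_span_monomial
    (hmax : ∀ μ ν, IsStandard S μ → Finsupp.weight n ν = Finsupp.weight n μ → ν ≠ μ →
      ν.degree < μ.degree) :
    tangentConeIdeal K n ≤ Ideal.span ((fun s => monomial s (1 : K)) '' S) := by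
  rw [tangentConeIdeal, Ideal.span_le]
  rintro _ ⟨f, hf, -, rfl⟩
  refine mem_ideal_span_monomial_image.2 fun μ hμ => ?_
  by_contra hstd
  obtain ⟨hμf, hμdeg⟩ := mem_support_lowHom_iff.1 hμ
  obtain ⟨ν, hνf, hne, hw⟩ := exists_weight_eq_of_mem_curveIdeal hf hμf
  have := hmax μ ν (fun s hs hsμ => hstd ⟨s, hs, hsμ⟩) hw hne
  have := minDeg_le hνf
  omega

theorem span_monomial_le_tangentConeIdeal
    (hS : ∀ s ∈ S, ∃ s', Finsupp.weight n s' = Finsupp.weight n s ∧ s.degree < s'.degree) :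
    Ideal.span ((fun s => monomial s (1 : K)) '' S) ≤ tangentConeIdeal K n := by
  rw [Ideal.span_le]
  rintro _ ⟨s, hs, rfl⟩
  obtain ⟨s', hw, hdeg⟩ := hS s hs
  refine Ideal.subset_span ⟨_, monomial_sub_monomial_mem_curveIdeal n hw.symm, ?_,
    (lowHom_monomial_sub_monomial hdeg).symm⟩
  rw [sub_ne_zero]
  exact fun h => hdeg.ne (congrArg Finsupp.degree (monomial_left_injective one_ne_zero h))

end TangentCone

section StandardBasis

variable {K : Type*} [Field K] {N : ℕ} (ρ : Fin N → ℕ) {S : Set (Fin N →₀ ℕ)}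

theorem isLM_monomial_iff {μ ν : Fin N →₀ ℕ} : IsLM ρ (monomial μ (1 : K)) ν ↔ ν = μ := by
  classical
  simp only [IsLM, support_monomial, one_ne_zero, if_false, Finset.mem_singleton, forall_eq]
  exact ⟨And.left, fun h => ⟨h, fun hne => absurd h.symm hne⟩⟩

theorem lmIdeal_span_monomial :
    lmIdeal K ρ (Ideal.span ((fun s => monomial s (1 : K)) '' S)) =
      Ideal.span ((fun s => monomial s (1 : K)) '' S) := by
  refine le_antisymm (Ideal.span_le.2 ?_) (Ideal.span_mono ?_)
  · rintro _ ⟨μ, ⟨f, hf, hμ, -⟩, rfl⟩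
    obtain ⟨s, hs, hsμ⟩ := mem_ideal_span_monomial_image.1 hf μ hμ
    exact mem_ideal_span_monomial_image.2 fun ν hν => ⟨s, hs, by
      rwa [Finset.mem_singleton.1 (support_monomial_subset hν)]⟩
  · rintro _ ⟨s, hs, rfl⟩
    exact ⟨s, ⟨_, Ideal.subset_span ⟨s, hs, rfl⟩, (isLM_monomial_iff ρ).2 rfl⟩, rfl⟩

theorem isStandardBasis_span_monomial (hS : S.Finite) :
    IsStandardBasis K ρ (Ideal.span ((fun s => monomial s (1 : K)) '' S))
      ((fun s => monomial s (1 : K)) '' S) := by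
  refine ⟨hS.image _, Ideal.subset_span, ?_⟩
  have : {μ | ∃ g ∈ (fun s => monomial s (1 : K)) '' S, IsLM ρ g μ} = S := by
    ext μ
    simp [isLM_monomial_iff]
  rw [this, lmIdeal_span_monomial]

end StandardBasis

namespace GluedCurve

variable {K : Type*} [Field K]

theorem weight_vecCons_four (a b c d : ℕ) (μ : Fin 4 →₀ ℕ) :
    Finsupp.weight ![a, b, c, d] μ = μ 0 * a + μ 1 * b + μ 2 * c + μ 3 * d := by
  rw [Finsupp.weight_eq_sum, Fin.sum_univ_four]
  rfl

theorem degree_fin_four (μ : Fin 4 →₀ ℕ) : μ.degree = μ 0 + μ 1 + μ 2 + μ 3 := by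
  rw [Finsupp.degree_eq_sum, Fin.sum_univ_four]

def exponent (a b c d : ℕ) : Fin 4 →₀ ℕ := Finsupp.equivFunOnFinite.symm ![a, b, c, d]

@[simp]
theorem exponent_apply (a b c d : ℕ) (i : Fin 4) : exponent a b c d i = ![a, b, c, d] i := rfl

theorem exponent_le_iff {a b c d : ℕ} {μ : Fin 4 →₀ ℕ} :
    exponent a b c d ≤ μ ↔ a ≤ μ 0 ∧ b ≤ μ 1 ∧ c ≤ μ 2 ∧ d ≤ μ 3 := by
  simp [Finsupp.le_def, Fin.forall_fin_succ]

theorem monomial_exponent (a b c d : ℕ) :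
    monomial (exponent a b c d) (1 : K) = X 0 ^ a * X 1 ^ b * X 2 ^ c * X 3 ^ d := by
  rw [monomial_eq, Finsupp.prod_fintype _ _ (fun _ => pow_zero _), Fin.prod_univ_four, C_1,
    one_mul]
  rfl

def tangentConeExponents : Set (Fin 4 →₀ ℕ) :=
  {exponent 1 1 0 0, exponent 0 5 0 0, exponent 0 0 15 0, exponent 0 0 0 7,
    exponent 0 4 3 0, exponent 0 3 6 0, exponent 0 2 9 0, exponent 0 1 12 0}

theorem monomial_image_tangentConeExponents :
    (fun s => monomial s (1 : K)) '' tangentConeExponents =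
      {X 0 * X 1, X 1 ^ 5, X 2 ^ 15, X 3 ^ 7, X 1 ^ 4 * X 2 ^ 3,
        X 1 ^ 3 * X 2 ^ 6, X 1 ^ 2 * X 2 ^ 9, X 1 * X 2 ^ 12} := by
  simp only [tangentConeExponents, Set.image_insert_eq, Set.image_singleton, monomial_exponent,
    pow_zero, pow_one, mul_one, one_mul]

theorem eq_of_weight_eq_of_degree_le {a b c d a' b' c' d' : ℕ}
    (hab : a = 0 ∨ b = 0) (hb : b < 5) (hc : c < 15) (hd : d < 7) (hbc₄ : b < 4 ∨ c < 3)
    (hbc₃ : b < 3 ∨ c < 6) (hbc₂ : b < 2 ∨ c < 9) (hbc₁ : b < 1 ∨ c < 12)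
    (hw : 105 * a' + 252 * b' + 119 * c' + 136 * d' = 105 * a + 252 * b + 119 * c + 136 * d)
    (hdeg : a + b + c + d ≤ a' + b' + c' + d') : a' = a ∧ b' = b ∧ c' = c ∧ d' = d := by
  obtain ⟨k, hk⟩ := Nat.exists_eq_add_of_le hdeg
  -- Subtracting `105 · degree` from the value leaves `147 b + 14 c + 31 d`, so `d' ≡ d [MOD 7]`.
  obtain ⟨j, rfl⟩ : ∃ j, d' = d + 7 * j := ⟨(d' - d) / 7, by omega⟩
  have hred : 21 * b' + 2 * c' + 31 * j + 15 * k = 21 * b + 2 * c := by omega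
  clear hw
  have : j = 0 ∧ k = 0 ∧ b' = b ∧ c' = c := by
    rcases hab with rfl | rfl <;> omega
  omega

theorem degree_lt_of_isStandard (μ ν : Fin 4 →₀ ℕ) (hμ : IsStandard tangentConeExponents μ)
    (hw : Finsupp.weight ![105, 252, 119, 136] ν = Finsupp.weight ![105, 252, 119, 136] μ)
    (hne : ν ≠ μ) : ν.degree < μ.degree := by
  simp only [IsStandard, tangentConeExponents, Set.mem_insert_iff, Set.mem_singleton_iff,
    forall_eq_or_imp, forall_eq, exponent_le_iff] at hμ
  rw [weight_vecCons_four, weight_vecCons_four] at hw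
  rw [degree_fin_four, degree_fin_four]
  by_contra! hle
  obtain ⟨h₀, h₁, h₂, h₃⟩ := eq_of_weight_eq_of_degree_le (by omega) (by omega) (by omega)
    (by omega) (by omega) (by omega) (by omega) (by omega) (by omega) hle
  exact hne (Finsupp.ext fun i => by fin_cases i <;> assumption)

def gluingIdeal (K : Type*) [Field K] : Ideal (MvPolynomial (Fin 4) K) :=
  Ideal.span {X 0 ^ 12 - X 1 ^ 5, X 2 ^ 8 - X 3 ^ 7, X 0 * X 1 - X 2 ^ 3}

theorem gluingIdeal_le_curveIdeal : gluingIdeal K ≤ curveIdeal K ![105, 252, 119, 136] := by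
  rw [gluingIdeal, Ideal.span_le]
  rintro _ (rfl | rfl | rfl) <;> simp [curveIdeal, ← pow_mul, ← pow_add]

theorem exists_partner_binomial : ∀ s ∈ tangentConeExponents, ∃ s',
    Finsupp.weight ![105, 252, 119, 136] s' = Finsupp.weight ![105, 252, 119, 136] s ∧
    s.degree < s'.degree ∧ Finsupp.weight ![2, 8, 3, 4] s' < Finsupp.weight ![2, 8, 3, 4] s ∧
    monomial s (1 : K) - monomial s' 1 ∈ gluingIdeal K := by
  have hrel : ∀ p ∈ ({X 0 ^ 12 - X 1 ^ 5, X 2 ^ 8 - X 3 ^ 7, X 0 * X 1 - X 2 ^ 3} :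
      Set (MvPolynomial (Fin 4) K)), Ideal.Quotient.mk (gluingIdeal K) p = 0 :=
    fun p hp => Ideal.Quotient.eq_zero_iff_mem.2 (Ideal.subset_span hp)
  simp only [Set.mem_insert_iff, Set.mem_singleton_iff, forall_eq_or_imp, forall_eq, map_sub,
    map_mul, map_pow] at hrel
  simp only [tangentConeExponents, Set.mem_insert_iff, Set.mem_singleton_iff, forall_eq_or_imp,
    forall_eq]
  refine ⟨⟨exponent 0 0 3 0, ?_⟩, ⟨exponent 12 0 0 0, ?_⟩, ⟨exponent 17 0 0 0, ?_⟩,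
    ⟨exponent 0 0 8 0, ?_⟩, ⟨exponent 13 0 0 0, ?_⟩, ⟨exponent 14 0 0 0, ?_⟩,
    ⟨exponent 15 0 0 0, ?_⟩, ⟨exponent 16 0 0 0, ?_⟩⟩ <;>
  refine ⟨by simp [weight_vecCons_four], by simp [degree_fin_four],
    by simp [weight_vecCons_four], ?_⟩ <;>
  rw [monomial_exponent, monomial_exponent, ← Ideal.Quotient.eq_zero_iff_mem] <;>
  simp only [map_sub, map_mul, map_pow] <;> grind

theorem curveIdeal_eq : curveIdeal K ![105, 252, 119, 136] = gluingIdeal K :=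
  le_antisymm
    (curveIdeal_le_of_reduction ![2, 8, 3, 4] gluingIdeal_le_curveIdeal
      (injOn_weight_isStandard degree_lt_of_isStandard)
      fun s hs => (exists_partner_binomial s hs).imp fun _ h => ⟨h.2.2.1, h.2.2.2⟩)
    gluingIdeal_le_curveIdeal

theorem tangentConeIdeal_eq : tangentConeIdeal K ![105, 252, 119, 136] =
    Ideal.span ((fun s => monomial s (1 : K)) '' tangentConeExponents) :=
  le_antisymm (tangentConeIdeal_le_span_monomial degree_lt_of_isStandard)
    (span_monomial_le_tangentConeIdeal fun s hs =>
      (exists_partner_binomial (K := K) s hs).imp fun _ h => ⟨h.1, h.2.1⟩)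

end GluedCurve

theorem example_non_CM_gluing_ideals_general (K : Type*) [Field K] :
    curveIdeal K ![105, 252, 119, 136] =
      Ideal.span ({X 0 ^ 12 - X 1 ^ 5, X 2 ^ 8 - X 3 ^ 7, X 0 * X 1 - X 2 ^ 3} :
        Set (MvPolynomial (Fin 4) K)) ∧
    tangentConeIdeal K ![105, 252, 119, 136] =
      Ideal.span ({X 0 * X 1, X 1 ^ 5, X 2 ^ 15, X 3 ^ 7, X 1 ^ 4 * X 2 ^ 3,
        X 1 ^ 3 * X 2 ^ 6, X 1 ^ 2 * X 2 ^ 9, X 1 * X 2 ^ 12} :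
        Set (MvPolynomial (Fin 4) K)) ∧
    IsStandardBasis K ![3, 0, 2, 1] (tangentConeIdeal K ![105, 252, 119, 136])
      ({X 0 * X 1, X 1 ^ 5, X 2 ^ 15, X 3 ^ 7, X 1 ^ 4 * X 2 ^ 3,
        X 1 ^ 3 * X 2 ^ 6, X 1 ^ 2 * X 2 ^ 9, X 1 * X 2 ^ 12} :
        Set (MvPolynomial (Fin 4) K)) := by
  rw [← GluedCurve.monomial_image_tangentConeExponents, GluedCurve.tangentConeIdeal_eq]
  exact ⟨GluedCurve.curveIdeal_eq, rfl, isStandardBasis_span_monomial _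
    (by simp [GluedCurve.tangentConeExponents])⟩

/-- **Example (continued).** For the glued curve `C = C(105, 252, 119, 136)` (with
variables `x₁, x₂, y₁, y₂` corresponding to `t¹⁰⁵, t²⁵², t¹¹⁹, t¹³⁶`), the defining
ideal is `I(C) = ⟨x₁¹² - x₂⁵, y₁⁸ - y₂⁷, x₁x₂ - y₁³⟩` and the tangent cone ideal
`I(C)_*` is generated by
`G_* = {x₁x₂, x₂⁵, y₁¹⁵, y₂⁷, x₂⁴y₁³, x₂³y₁⁶, x₂²y₁⁹, x₂y₁¹²}`, which is a Gröbner
(standard) basis of `I(C)_*` with respect to the negative degree reverse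
lexicographical ordering with `x₂ > y₂ > y₁ > x₁`. -/
theorem example_non_CM_gluing_ideals (K : Type*) [Field K] [IsAlgClosed K] :
    curveIdeal K ![105, 252, 119, 136] =
      Ideal.span ({X 0 ^ 12 - X 1 ^ 5, X 2 ^ 8 - X 3 ^ 7, X 0 * X 1 - X 2 ^ 3} :
        Set (MvPolynomial (Fin 4) K)) ∧
    tangentConeIdeal K ![105, 252, 119, 136] =
      Ideal.span ({X 0 * X 1, X 1 ^ 5, X 2 ^ 15, X 3 ^ 7, X 1 ^ 4 * X 2 ^ 3,
        X 1 ^ 3 * X 2 ^ 6, X 1 ^ 2 * X 2 ^ 9, X 1 * X 2 ^ 12} :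
        Set (MvPolynomial (Fin 4) K)) ∧
    IsStandardBasis K ![3, 0, 2, 1] (tangentConeIdeal K ![105, 252, 119, 136])
      ({X 0 * X 1, X 1 ^ 5, X 2 ^ 15, X 3 ^ 7, X 1 ^ 4 * X 2 ^ 3,
        X 1 ^ 3 * X 2 ^ 6, X 1 ^ 2 * X 2 ^ 9, X 1 * X 2 ^ 12} :
        Set (MvPolynomial (Fin 4) K)) :=
  example_non_CM_gluing_ideals_general K

end
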